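/- Let (H,•,1,Δ,ε,T) be a Hopf algebra and (H,⇀,↼) a matched pair of actions on H. Then H with the left action ⇀ and the left adjoint coaction Ad_L(a)=a₁•T(a₃)⊗a₂ is a left-left Yetter–Drinfeld module over H, i.e. Ad_L(a⇀b) = a₁•b₁•T(b₃)•T(a₃) ⊗ (a₂⇀b₂). -/

import Mathlib

open TensorProduct

noncomputable section

variable (k H : Type*) [Field k] [Ring H] [HopfAlgebra k H]

/-- Multiplication of `H` as a linear map. -/
def mu : H ⊗[k] H →ₗ[k] H := LinearMap.mul' k H
/-- Comultiplication. -/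
def delta : H →ₗ[k] H ⊗[k] H := Coalgebra.comul
/-- Counit. -/
def eps : H →ₗ[k] k := Coalgebra.counit
/-- Flip `a⊗b ↦ b⊗a`. -/
def tau : H ⊗[k] H →ₗ[k] H ⊗[k] H := (TensorProduct.comm k H H).toLinearMap
/-- Associator. -/
def assocMap : (H ⊗[k] H) ⊗[k] H →ₗ[k] H ⊗[k] (H ⊗[k] H) :=
  (TensorProduct.assoc k H H H).toLinearMap
/-- Inverse associator. -/
def assocInv : H ⊗[k] (H ⊗[k] H) →ₗ[k] (H ⊗[k] H) ⊗[k] H :=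
  (TensorProduct.assoc k H H H).symm.toLinearMap
/-- The middle-four interchange `(a⊗b)⊗(c⊗d) ↦ (a⊗c)⊗(b⊗d)`. -/
def ttcMap : (H ⊗[k] H) ⊗[k] (H ⊗[k] H) →ₗ[k] (H ⊗[k] H) ⊗[k] (H ⊗[k] H) :=
  (TensorProduct.tensorTensorTensorComm k H H H H).toLinearMap
/-- `a⊗b ↦ (a₁⊗b₁)⊗(a₂⊗b₂)` (Sweedler notation). -/
def dd : H ⊗[k] H →ₗ[k] (H ⊗[k] H) ⊗[k] (H ⊗[k] H) :=
  ttcMap k H ∘ₗ map (delta k H) (delta k H)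
/-- `a⊗b ↦ ((a₁⊗b₁)⊗(a₂⊗b₂))⊗(a₃⊗b₃)`. -/
def ddd : H ⊗[k] H →ₗ[k] ((H ⊗[k] H) ⊗[k] (H ⊗[k] H)) ⊗[k] (H ⊗[k] H) :=
  map (dd k H) LinearMap.id ∘ₗ dd k H
/-- `a⊗b ↦ ε(a)ε(b)`. -/
def epseps : H ⊗[k] H →ₗ[k] k := LinearMap.mul' k k ∘ₗ map (eps k H) (eps k H)
/-- `σ(a⊗b) = (a₁⇀b₁)⊗(a₂↼b₂)` attached to a pair of "actions". -/
def sig (l r : H ⊗[k] H →ₗ[k] H) : H ⊗[k] H →ₗ[k] H ⊗[k] H :=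
  map l r ∘ₗ dd k H

/-- The antipode of `H`. -/
def anti : H →ₗ[k] H := HopfAlgebra.antipode k

/-- A matched pair of actions `(H,⇀,↼)` on the Hopf algebra `H` (Definition 2.1):
`l`, `r` are a left and a right action of `H` on itself making `H` a left and right
`H`-module coalgebra, satisfying (mp.1)–(mp.4) and the braided commutativity (★). -/
structure MatchedPairOfActions (l r : H ⊗[k] H →ₗ[k] H) : Prop where
  one_act : ∀ b : H, l ((1 : H) ⊗ₜ[k] b) = b
  mul_act : ∀ a b c : H, l ((a * b) ⊗ₜ[k] c) = l (a ⊗ₜ[k] l (b ⊗ₜ[k] c))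
  act_one : ∀ a : H, r (a ⊗ₜ[k] (1 : H)) = a
  act_mul : ∀ a b c : H, r (a ⊗ₜ[k] (b * c)) = r (r (a ⊗ₜ[k] b) ⊗ₜ[k] c)
  comul_l : delta k H ∘ₗ l = map l l ∘ₗ dd k H
  counit_l : eps k H ∘ₗ l = epseps k H
  comul_r : delta k H ∘ₗ r = map r r ∘ₗ dd k H
  counit_r : eps k H ∘ₗ r = epseps k H
  mp1 : ∀ a : H, l (a ⊗ₜ[k] (1 : H)) = eps k H a • (1 : H)
  mp2 : ∀ b : H, r ((1 : H) ⊗ₜ[k] b) = eps k H b • (1 : H)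
  mp3 : l ∘ₗ map LinearMap.id (mu k H) ∘ₗ assocMap k H
      = mu k H ∘ₗ map LinearMap.id l ∘ₗ assocMap k H ∘ₗ map (sig k H l r) LinearMap.id
  mp4 : r ∘ₗ map (mu k H) LinearMap.id
      = mu k H ∘ₗ map r LinearMap.id ∘ₗ assocInv k H ∘ₗ map LinearMap.id (sig k H l r) ∘ₗ
          assocMap k H
  star : mu k H ∘ₗ sig k H l r = mu k H

/-- The second product `a·b := a₁•(T(a₂)⇀b)` attached to a left action `l = ⇀`. -/
def cdot (l : H ⊗[k] H →ₗ[k] H) : H ⊗[k] H →ₗ[k] H :=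
  mu k H ∘ₗ map LinearMap.id l ∘ₗ assocMap k H ∘ₗ
    map (map LinearMap.id (anti k H) ∘ₗ delta k H) LinearMap.id

/-- The map `S(a) := a₁⇀T(a₂)` attached to a left action `l = ⇀`. -/
def Smap (l : H ⊗[k] H →ₗ[k] H) : H →ₗ[k] H :=
  l ∘ₗ map LinearMap.id (anti k H) ∘ₗ delta k H

/-- The left adjoint coaction `Ad_L(a) = (a₁•T(a₃)) ⊗ a₂`. -/
def adL : H →ₗ[k] H ⊗[k] H :=
  map (mu k H ∘ₗ map LinearMap.id (anti k H)) LinearMap.id ∘ₗ assocInv k H ∘ₗ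
    map LinearMap.id (tau k H) ∘ₗ map LinearMap.id (delta k H) ∘ₗ delta k H


/-!
Everything happens in convolution rings of linear maps out of the coalgebra `H ⊗ H`. The axioms
say that `⇀` and `↼` are coalgebra maps with `⇀ * ↼ = μ`, so both are convolution invertible and
`T(a⇀b) = (a₁↼b₁) T(a₂b₂)`. Computing `Δ(ab)` once as `Δ(a)Δ(b)` and once through
`ab = (a₁⇀b₁)(a₂↼b₂)` shows that `↼ ⊗ 1` and `1 ⊗ ⇀` commute in the convolution ring of maps
`H ⊗ H → H ⊗ H`. Since `Ad_L = Δ * (T ⊗ 1)`, the composite `Ad_L ∘ ⇀` is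
`(⇀ ⊗ 1) * (1 ⊗ ⇀) * (↼ ⊗ 1) * (T μ ⊗ 1)`; swapping the middle factors and using `⇀ * ↼ = μ`
turns it into `(μ ⊗ 1) * (1 ⊗ ⇀) * (T μ ⊗ 1)`, which is the claimed formula.
-/

open Coalgebra WithConv

section Convolution

variable {R C D A B : Type*} [CommSemiring R] [AddCommMonoid C] [Module R C] [Coalgebra R C]
  [Semiring A] [Algebra R A] [Semiring B] [Algebra R B]

def AlgHom.compConv (φ : A →ₐ[R] B) : WithConv (C →ₗ[R] A) →+* WithConv (C →ₗ[R] B) where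
  toFun f := toConv (φ.toLinearMap ∘ₗ f.ofConv)
  map_one' := by ext; simp
  map_mul' f g := by ext1; exact LinearMap.algHom_comp_convMul_distrib φ f g
  map_zero' := by ext; simp
  map_add' f g := by ext; simp

@[simp]
theorem AlgHom.compConv_toConv (φ : A →ₐ[R] B) (f : C →ₗ[R] A) :
    φ.compConv (toConv f) = toConv (φ.toLinearMap ∘ₗ f) := rfl

variable [AddCommMonoid D] [Module R D] [Coalgebra R D]

def CoalgHom.compConv (g : D →ₗc[R] C) : WithConv (C →ₗ[R] A) →+* WithConv (D →ₗ[R] A) where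
  toFun f := toConv (f.ofConv ∘ₗ g.toLinearMap)
  map_one' := by ext; simp
  map_mul' f f' := by ext1; exact LinearMap.convMul_comp_coalgHom_distrib f f' g
  map_zero' := by ext; simp
  map_add' f f' := by ext; simp

@[simp]
theorem CoalgHom.compConv_toConv (g : D →ₗc[R] C) (f : C →ₗ[R] A) :
    g.compConv (toConv f) = toConv (f ∘ₗ g.toLinearMap) := rfl

theorem includeLeft_compConv_mul_includeRight_compConv (f : C →ₗ[R] A) (g : C →ₗ[R] B) :
    Algebra.TensorProduct.includeLeft.compConv (toConv f) *
        Algebra.TensorProduct.includeRight.compConv (toConv g) =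
      toConv (map f g ∘ₗ comul) := by
  ext c
  simp [(ℛ R c).convMul_apply, ← (ℛ R c).eq, Algebra.TensorProduct.tmul_mul_tmul]

end Convolution

section TripleConvolution

variable {R C D A : Type*} [CommSemiring R] [AddCommMonoid C] [Module R C] [Coalgebra R C]
  [AddCommMonoid D] [Module R D] [Coalgebra R D] [Semiring A] [Algebra R A]

theorem lTensor_comul_comp_comul_tensor :
    comul.lTensor (C ⊗[R] D) ∘ₗ (comul : C ⊗[R] D →ₗ[R] _) =
      (tensorTensorTensorComm R C C D D).toLinearMap.lTensor (C ⊗[R] D) ∘ₗ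
        (tensorTensorTensorComm R C (C ⊗[R] C) D (D ⊗[R] D)).toLinearMap ∘ₗ
        map (comul.lTensor C ∘ₗ comul) (comul.lTensor D ∘ₗ comul) := by
  rw [comul_def, AlgebraTensorModule.tensorTensorTensorComm_eq, AlgebraTensorModule.map_eq,
    LinearMap.lTensor_comp, map_comp]
  have hnat := tensorTensorTensorComm_comp_map (R := R) (f := LinearMap.id (M := C))
    (g := comul (A := C)) (h := LinearMap.id (M := D)) (j := comul (A := D))
  rw [map_id] at hnat
  simp only [LinearMap.comp_assoc, LinearMap.lTensor]
  congr 1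
  rw [← LinearMap.comp_assoc, ← hnat, LinearMap.comp_assoc]

theorem convMul_convMul_apply_tmul {ι κ : Type*} (f g h : WithConv (C ⊗[R] D →ₗ[R] A))
    {c : C} {d : D} {s : Finset ι} {t : Finset κ} {c₁ c₂ c₃ : ι → C} {d₁ d₂ d₃ : κ → D}
    (hc : comul.lTensor C (comul c) = ∑ i ∈ s, c₁ i ⊗ₜ[R] (c₂ i ⊗ₜ[R] c₃ i))
    (hd : comul.lTensor D (comul d) = ∑ j ∈ t, d₁ j ⊗ₜ[R] (d₂ j ⊗ₜ[R] d₃ j)) :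
    (f * (g * h)) (c ⊗ₜ d) =
      ∑ i ∈ s, ∑ j ∈ t, f (c₁ i ⊗ₜ d₁ j) * (g (c₂ i ⊗ₜ d₂ j) * h (c₃ i ⊗ₜ d₃ j)) := by
  have hmap : map f.ofConv (g * h).ofConv ∘ₗ comul = (LinearMap.mul' R A).lTensor A ∘ₗ
      map f.ofConv (map g.ofConv h.ofConv) ∘ₗ (comul.lTensor (C ⊗[R] D) ∘ₗ comul) := by
    simp only [LinearMap.convMul_def, ofConv_toConv, LinearMap.lTensor, ← LinearMap.comp_assoc,
      ← map_comp, LinearMap.id_comp, LinearMap.comp_id]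
  rw [lTensor_comul_comp_comul_tensor] at hmap
  change LinearMap.mul' R A ((map f.ofConv (g * h).ofConv ∘ₗ comul) (c ⊗ₜ[R] d)) = _
  rw [hmap]
  simp only [LinearMap.comp_apply, TensorProduct.map_tmul, hc, hd, sum_tmul, tmul_sum, map_sum,
    LinearEquiv.coe_coe, tensorTensorTensorComm_tmul, LinearMap.lTensor_tmul, LinearMap.mul'_apply]
  exact Finset.sum_comm

end TripleConvolution

section BialgebraConvolution

variable {R C A : Type*} [CommSemiring R] [AddCommMonoid C] [Module R C] [Coalgebra R C]

theorem CoalgHom.includeLeft_compConv_mul_includeRight_compConv_self [Semiring A]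
    [Bialgebra R A] (f : C →ₗc[R] A) :
    Algebra.TensorProduct.includeLeft.compConv (toConv f.toLinearMap) *
        Algebra.TensorProduct.includeRight.compConv (toConv f.toLinearMap) =
      toConv (comul ∘ₗ f.toLinearMap) := by
  rw [includeLeft_compConv_mul_includeRight_compConv, f.map_comp_comul]

variable [Semiring A] [HopfAlgebra R A]

theorem CoalgHom.antipode_comp_convMul_self (f : C →ₗc[R] A) :
    toConv (HopfAlgebra.antipode R ∘ₗ f.toLinearMap) * toConv f.toLinearMap = 1 := by
  have h := congr(f.compConv $(LinearMap.antipode_mul_id (R := R) (C := A)))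
  rwa [map_mul, map_one, CoalgHom.compConv_toConv, CoalgHom.compConv_toConv,
    LinearMap.id_comp] at h

theorem CoalgHom.convMul_antipode_comp_self (f : C →ₗc[R] A) :
    toConv f.toLinearMap * toConv (HopfAlgebra.antipode R ∘ₗ f.toLinearMap) = 1 := by
  have h := congr(f.compConv $(LinearMap.id_mul_antipode (R := R) (C := A)))
  rwa [map_mul, map_one, CoalgHom.compConv_toConv, CoalgHom.compConv_toConv,
    LinearMap.id_comp] at h

end BialgebraConvolution

open Algebra.TensorProduct (includeLeft includeRight)

theorem adL_eq_comul_convMul_includeLeft_antipode :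
    toConv (adL k H) = toConv (delta k H) * includeLeft.compConv (toConv (anti k H)) := by
  have hshape : LinearMap.mul' k (H ⊗[k] H) ∘ₗ
        map LinearMap.id (includeLeft.toLinearMap ∘ₗ anti k H) ∘ₗ
        (TensorProduct.assoc k H H H).symm.toLinearMap =
      map (mu k H ∘ₗ map LinearMap.id (anti k H)) LinearMap.id ∘ₗ
        assocInv k H ∘ₗ map LinearMap.id (tau k H) := by
    ext x y z
    simp [mu, tau, assocInv, Algebra.TensorProduct.tmul_mul_tmul]
  ext1
  calc adL k H
      = (LinearMap.mul' k (H ⊗[k] H) ∘ₗ map LinearMap.id (includeLeft.toLinearMap ∘ₗ anti k H) ∘ₗ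
          (TensorProduct.assoc k H H H).symm.toLinearMap) ∘ₗ comul.lTensor H ∘ₗ comul := by
        rw [hshape]; rfl
    _ = LinearMap.mul' k (H ⊗[k] H) ∘ₗ map LinearMap.id (includeLeft.toLinearMap ∘ₗ anti k H) ∘ₗ
          comul.rTensor H ∘ₗ comul := by
        rw [← coassoc_symm]; simp only [LinearMap.comp_assoc]
    _ = _ := by
        rw [LinearMap.convMul_def]
        simp only [AlgHom.compConv_toConv, ofConv_toConv, LinearMap.rTensor, ← LinearMap.comp_assoc,
          ← map_comp, LinearMap.id_comp, LinearMap.comp_id]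
        rfl

section MatchedPair

variable {k H}

theorem counit_tensor_eq_epseps : (counit : H ⊗[k] H →ₗ[k] k) = epseps k H := by
  ext a b
  simp [epseps, eps, mul_comm]

def tensorCoalgHom (f : H ⊗[k] H →ₗ[k] H)
    (hΔ : delta k H ∘ₗ f = map f f ∘ₗ dd k H) (hε : eps k H ∘ₗ f = epseps k H) :
    H ⊗[k] H →ₗc[k] H where
  toLinearMap := f
  counit_comp := hε.trans counit_tensor_eq_epseps.symm
  map_comp_comul := hΔ.symm

local notation "ι₁ " f:max =>
  (includeLeft.compConv (toConv f) : WithConv (H ⊗[k] H →ₗ[k] H ⊗[k] H))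
local notation "ι₂ " f:max =>
  (includeRight.compConv (toConv f) : WithConv (H ⊗[k] H →ₗ[k] H ⊗[k] H))

namespace MatchedPairOfActions

variable {l r : H ⊗[k] H →ₗ[k] H}

def leftCoalgHom (hmp : MatchedPairOfActions k H l r) : H ⊗[k] H →ₗc[k] H :=
  tensorCoalgHom l hmp.comul_l hmp.counit_l

def rightCoalgHom (hmp : MatchedPairOfActions k H l r) : H ⊗[k] H →ₗc[k] H :=
  tensorCoalgHom r hmp.comul_r hmp.counit_r

theorem convMul_eq_mu (hmp : MatchedPairOfActions k H l r) :
    toConv l * toConv r = toConv (mu k H) :=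
  WithConv.ext hmp.star

theorem antipode_comp_left_convMul_left (hmp : MatchedPairOfActions k H l r) :
    toConv (anti k H ∘ₗ l) * toConv l = 1 :=
  hmp.leftCoalgHom.antipode_comp_convMul_self

theorem right_convMul_antipode_comp_right (hmp : MatchedPairOfActions k H l r) :
    toConv r * toConv (anti k H ∘ₗ r) = 1 :=
  hmp.rightCoalgHom.convMul_antipode_comp_self

theorem toConv_delta_comp_left (hmp : MatchedPairOfActions k H l r) :
    toConv (delta k H ∘ₗ l) = ι₁ l * ι₂ l :=
  hmp.leftCoalgHom.includeLeft_compConv_mul_includeRight_compConv_self.symm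

theorem toConv_delta_comp_right (hmp : MatchedPairOfActions k H l r) :
    toConv (delta k H ∘ₗ r) = ι₁ r * ι₂ r :=
  hmp.rightCoalgHom.includeLeft_compConv_mul_includeRight_compConv_self.symm

theorem toConv_antipode_comp_left (hmp : MatchedPairOfActions k H l r) :
    toConv (anti k H ∘ₗ l) = toConv r * toConv (anti k H ∘ₗ mu k H) := by
  have hμ : toConv (mu k H) * toConv (anti k H ∘ₗ mu k H) = 1 :=
    (Bialgebra.mulCoalgHom k H).convMul_antipode_comp_self
  calc toConv (anti k H ∘ₗ l)
      = toConv (anti k H ∘ₗ l) * (toConv l * toConv r * toConv (anti k H ∘ₗ mu k H)) := by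
        rw [hmp.convMul_eq_mu, hμ, mul_one]
    _ = toConv r * toConv (anti k H ∘ₗ mu k H) := by
        rw [← mul_assoc, ← mul_assoc, hmp.antipode_comp_left_convMul_left, one_mul]

theorem commute_includeLeft_right_includeRight_left (hmp : MatchedPairOfActions k H l r) :
    Commute (ι₁ r) (ι₂ l) := by
  have hmul : toConv (delta k H ∘ₗ mu k H) = ι₁ l * ι₁ r * (ι₂ l * ι₂ r) := by
    have hμ : toConv (delta k H ∘ₗ mu k H) = ι₁ (mu k H) * ι₂ (mu k H) :=
      (Bialgebra.mulCoalgHom k H).includeLeft_compConv_mul_includeRight_compConv_self.symm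
    rw [hμ, ← hmp.convMul_eq_mu, map_mul, map_mul]
  have hcomul : toConv (delta k H ∘ₗ mu k H) = ι₁ l * ι₂ l * (ι₁ r * ι₂ r) := by
    calc toConv (delta k H ∘ₗ mu k H)
        = (Bialgebra.comulAlgHom k H).compConv (toConv l * toConv r) := by
          rw [hmp.convMul_eq_mu]; rfl
      _ = toConv (delta k H ∘ₗ l) * toConv (delta k H ∘ₗ r) := map_mul _ _ _
      _ = ι₁ l * ι₂ l * (ι₁ r * ι₂ r) := by
          rw [hmp.toConv_delta_comp_left, hmp.toConv_delta_comp_right]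
  have hl : ι₁ (anti k H ∘ₗ l) * ι₁ l = 1 := by
    rw [← map_mul, hmp.antipode_comp_left_convMul_left, map_one]
  have hr : ι₂ r * ι₂ (anti k H ∘ₗ r) = 1 := by
    rw [← map_mul, hmp.right_convMul_antipode_comp_right, map_one]
  calc ι₁ r * ι₂ l
      = ι₁ (anti k H ∘ₗ l) * (ι₁ l * ι₁ r * (ι₂ l * ι₂ r)) * ι₂ (anti k H ∘ₗ r) := by
        simp only [← mul_assoc, hl, one_mul]; simp only [mul_assoc, hr, mul_one]
    _ = ι₂ l * ι₁ r := by
        rw [← hmul, hcomul]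
        simp only [← mul_assoc, hl, one_mul]; simp only [mul_assoc, hr, mul_one]

theorem toConv_adL_comp_left (hmp : MatchedPairOfActions k H l r) :
    toConv (adL k H ∘ₗ l) = ι₁ (mu k H) * (ι₂ l * ι₁ (anti k H ∘ₗ mu k H)) := by
  calc toConv (adL k H ∘ₗ l)
      = hmp.leftCoalgHom.compConv
          (toConv (delta k H) * includeLeft.compConv (toConv (anti k H))) := by
        rw [← adL_eq_comul_convMul_includeLeft_antipode]; rfl
    _ = toConv (delta k H ∘ₗ l) * ι₁ (anti k H ∘ₗ l) := by
        rw [map_mul]; rfl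
    _ = ι₁ l * (ι₂ l * ι₁ r) * ι₁ (anti k H ∘ₗ mu k H) := by
        rw [hmp.toConv_delta_comp_left, hmp.toConv_antipode_comp_left, map_mul]
        simp only [mul_assoc]
    _ = _ := by
        rw [← hmp.commute_includeLeft_right_includeRight_left.eq, ← mul_assoc, ← map_mul,
          hmp.convMul_eq_mu, mul_assoc]

end MatchedPairOfActions

end MatchedPair

/-- Lemma 3.7: for a matched pair of actions on a Hopf algebra `H`, the pair
`(⇀, Ad_L)` makes `H` a left-left Yetter–Drinfeld module over itself, i.e.
`Ad_L(a⇀b) = a₁•b₁•T(b₃)•T(a₃) ⊗ (a₂⇀b₂)`. -/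
theorem adjoint_coaction_yetterDrinfeld (l r : H ⊗[k] H →ₗ[k] H)
    (hmp : MatchedPairOfActions k H l r) :
    ∀ (a b : H) (ι κ : Type) (s : Finset ι) (t : Finset κ)
      (a1 a2 a3 : ι → H) (b1 b2 b3 : κ → H),
      (map LinearMap.id (delta k H) ∘ₗ delta k H) a
          = ∑ i ∈ s, a1 i ⊗ₜ[k] (a2 i ⊗ₜ[k] a3 i) →
      (map LinearMap.id (delta k H) ∘ₗ delta k H) b
          = ∑ j ∈ t, b1 j ⊗ₜ[k] (b2 j ⊗ₜ[k] b3 j) →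
      adL k H (l (a ⊗ₜ[k] b))
        = ∑ i ∈ s, ∑ j ∈ t,
            (a1 i * b1 j * anti k H (b3 j) * anti k H (a3 i)) ⊗ₜ[k] l (a2 i ⊗ₜ[k] b2 j) := by
  intro a b ι κ s t a1 a2 a3 b1 b2 b3 ha hb
  have h := congr($(hmp.toConv_adL_comp_left) (a ⊗ₜ[k] b))
  rw [convMul_convMul_apply_tmul _ _ _ ha hb] at h
  refine h.trans (Finset.sum_congr rfl fun i _ => Finset.sum_congr rfl fun j _ => ?_)
  simp [mu, anti, Algebra.TensorProduct.tmul_mul_tmul, HopfAlgebra.antipode_mul_antidistrib,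
    mul_assoc]

end
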